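/- Let A be a non-unital Banach algebra. If A is approximately (2n−1)-weakly amenable, then its unitization A# is approximately (2n−1)-weakly amenable. -/

import Mathlib

open ContinuousLinearMap Filter Topology

open ContinuousLinearMap Filter Topology

/-- A Banach `A`-bimodule: a complete normed `ℂ`-space with commuting continuous
left and right `A`-actions, jointly bounded and bilinear. -/
structure BBimod (A : Type) [NonUnitalNormedRing A] [NormedSpace ℂ A] where
  carrier : Type
  [grp : NormedAddCommGroup carrier]
  [mod : NormedSpace ℂ carrier]
  [complete : CompleteSpace carrier]
  lsmul : A → carrier →L[ℂ] carrier
  rsmul : A → carrier →L[ℂ] carrier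
  lsmul_add : ∀ a b, lsmul (a + b) = lsmul a + lsmul b
  rsmul_add : ∀ a b, rsmul (a + b) = rsmul a + rsmul b
  lsmul_smul : ∀ (c : ℂ) (a), lsmul (c • a) = c • lsmul a
  rsmul_smul : ∀ (c : ℂ) (a), rsmul (c • a) = c • rsmul a
  lsmul_mul : ∀ a b, lsmul (a * b) = (lsmul a).comp (lsmul b)
  rsmul_mul : ∀ a b, rsmul (a * b) = (rsmul b).comp (rsmul a)
  lsmul_rsmul : ∀ a b, (lsmul a).comp (rsmul b) = (rsmul b).comp (lsmul a)
  bound : ∃ C : ℝ, ∀ a, ‖lsmul a‖ ≤ C * ‖a‖ ∧ ‖rsmul a‖ ≤ C * ‖a‖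

attribute [instance] BBimod.grp BBimod.mod BBimod.complete

variable {A : Type} [NonUnitalNormedRing A] [NormedSpace ℂ A]

/-- The dual of a Banach bimodule, with the canonical dual actions
`⟨u, Λ·a⟩ = ⟨a·u, Λ⟩` and `⟨u, a·Λ⟩ = ⟨u·a, Λ⟩`. -/
noncomputable def BBimod.dual (M : BBimod A) : BBimod A where
  carrier := M.carrier →L[ℂ] ℂ
  lsmul a := (compL ℂ M.carrier M.carrier ℂ).flip (M.rsmul a)
  rsmul a := (compL ℂ M.carrier M.carrier ℂ).flip (M.lsmul a)
  lsmul_add a b := by ext Λ x; simp [M.rsmul_add]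
  rsmul_add a b := by ext Λ x; simp [M.lsmul_add]
  lsmul_smul c a := by ext Λ x; simp [M.rsmul_smul]
  rsmul_smul c a := by ext Λ x; simp [M.lsmul_smul]
  lsmul_mul a b := by ext Λ x; simp [M.rsmul_mul]
  rsmul_mul a b := by ext Λ x; simp [M.lsmul_mul]
  lsmul_rsmul a b := by
    ext Λ x
    have h : M.lsmul b (M.rsmul a x) = M.rsmul a (M.lsmul b x) := by
      have := congrArg (fun T : M.carrier →L[ℂ] M.carrier => T x) (M.lsmul_rsmul b a)
      simpa using this
    simp [h]
  bound := by
    obtain ⟨C, hC⟩ := M.bound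
    refine ⟨C, fun a => ⟨?_, ?_⟩⟩
    · refine opNorm_le_bound _ ?_ fun Λ => ?_
      · exact le_trans (norm_nonneg _) (hC a).2
      · calc ‖Λ.comp (M.rsmul a)‖ ≤ ‖Λ‖ * ‖M.rsmul a‖ := opNorm_comp_le _ _
          _ ≤ (C * ‖a‖) * ‖Λ‖ := by
              rw [mul_comm]
              exact mul_le_mul_of_nonneg_right (hC a).2 (norm_nonneg _)
    · refine opNorm_le_bound _ ?_ fun Λ => ?_
      · exact le_trans (norm_nonneg _) (hC a).1
      · calc ‖Λ.comp (M.lsmul a)‖ ≤ ‖Λ‖ * ‖M.lsmul a‖ := opNorm_comp_le _ _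
          _ ≤ (C * ‖a‖) * ‖Λ‖ := by
              rw [mul_comm]
              exact mul_le_mul_of_nonneg_right (hC a).1 (norm_nonneg _)

variable (A) [IsScalarTower ℂ A A] [SMulCommClass ℂ A A] [CompleteSpace A]

/-- `A` as a Banach bimodule over itself. -/
noncomputable def BBimod.base : BBimod A where
  carrier := A
  lsmul a := ContinuousLinearMap.mul ℂ A a
  rsmul a := (ContinuousLinearMap.mul ℂ A).flip a
  lsmul_add a b := by ext x; simp [add_mul]
  rsmul_add a b := by ext x; simp [mul_add]
  lsmul_smul c a := by ext x; simp [smul_mul_assoc]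
  rsmul_smul c a := by ext x; simp [mul_smul_comm]
  lsmul_mul a b := by ext x; simp [mul_assoc]
  rsmul_mul a b := by ext x; simp [mul_assoc]
  lsmul_rsmul a b := by ext x; simp [mul_assoc]
  bound := by
    refine ⟨1, fun a => ⟨?_, ?_⟩⟩
    · simpa using ContinuousLinearMap.opNorm_mul_apply_le ℂ A a
    · refine le_trans (opNorm_le_bound _ (norm_nonneg a) fun x => ?_) (by simp)
      simpa [mul_comm] using norm_mul_le x a


/-- The `n`-th dual `A^(n)` of `A` as a Banach `A`-bimodule. -/
noncomputable def iterDual : ℕ → BBimod A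
  | 0 => BBimod.base A
  | n + 1 => (iterDual n).dual

variable {A}

/-- `D` is a derivation from `A` into the Banach bimodule `M`. -/
def IsDerivation (M : BBimod A) (D : A →L[ℂ] M.carrier) : Prop :=
  ∀ a b : A, D (a * b) = M.lsmul a (D b) + M.rsmul b (D a)

/-- `D` is an inner derivation. -/
def IsInner (M : BBimod A) (D : A →L[ℂ] M.carrier) : Prop :=
  ∃ x : M.carrier, ∀ a : A, D a = M.lsmul a x - M.rsmul a x

/-- `D` is approximately inner: there is a net `(x_i)` in `M` with
`D a = lim_i (a·x_i − x_i·a)` for every `a`. -/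
def IsApproxInner (M : BBimod A) (D : A →L[ℂ] M.carrier) : Prop :=
  ∃ (ι : Type) (l : Filter ι) (x : ι → M.carrier), l.NeBot ∧
    ∀ a : A, Tendsto (fun i => M.lsmul a (x i) - M.rsmul a (x i)) l (𝓝 (D a))

variable (A)

/-- `A` is weakly amenable. -/
def WeaklyAmenable : Prop :=
  ∀ D : A →L[ℂ] (iterDual A 1).carrier, IsDerivation (iterDual A 1) D → IsInner (iterDual A 1) D

/-- `A` is approximately `n`-weakly amenable. -/
def ApproxNWeaklyAmenable (n : ℕ) : Prop :=
  ∀ D : A →L[ℂ] (iterDual A n).carrier,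
    IsDerivation (iterDual A n) D → IsApproxInner (iterDual A n) D

/-- `A` is `n`-weakly amenable. -/
def NWeaklyAmenable (n : ℕ) : Prop :=
  ∀ D : A →L[ℂ] (iterDual A n).carrier,
    IsDerivation (iterDual A n) D → IsInner (iterDual A n) D

/-- `A` is approximately weakly amenable. -/
def ApproxWeaklyAmenable : Prop := ApproxNWeaklyAmenable A 1

/-- `A` is approximately amenable: every continuous derivation into the dual of a
Banach `A`-bimodule is approximately inner. -/
def ApproxAmenable : Prop :=
  ∀ (X : BBimod A) (D : A →L[ℂ] X.dual.carrier), IsDerivation X.dual D → IsApproxInner X.dual D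
variable (A : Type) [NonUnitalNormedRing A] [NormedSpace ℂ A]
  [IsScalarTower ℂ A A] [SMulCommClass ℂ A A] [CompleteSpace A]

/-!
A derivation `D : A# → (A#)^(2n−1)` kills `1`, so it is determined by `D ∘ inr`. Composed with the
restriction map `P : (A#)^(2n−1) → A^(2n−1)` it gives a derivation `d` of `A`, which is approximately
inner by hypothesis, `d = lim ad Λᵢ`. The remaining coordinate `a ↦ ⟨D a, e⟩` of `D` (along `e*`)
equals `⟨d b, a⟩ + ⟨d a, b⟩` at `a * b`, and this vanishes for every approximately inner derivation
into an odd dual. Approximate `(2n−1)`-weak amenability leaves no nonzero functional `φ` vanishing on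
`A²`: otherwise `x ↦ φ(x) φ`, with `φ` lifted to `A^(2n−1)`, would be a derivation with
`⟨D x, x⟩ = φ(x)² ≠ 0`. Hence
`D = J ∘ d ∘ snd` for the extension map `J : A^(2n−1) → (A#)^(2n−1)`, and the net `J Λᵢ` shows that
`D` is approximately inner.
-/

section StrongDualMap

variable {E F : Type} [NormedAddCommGroup E] [NormedSpace ℂ E] [NormedAddCommGroup F]
  [NormedSpace ℂ F]

noncomputable def strongDualMap (T : E →L[ℂ] F) : StrongDual ℂ F →L[ℂ] StrongDual ℂ E :=
  (compL ℂ E F ℂ).flip T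

lemma strongDualMap_add_smul_eq_self {P : E →L[ℂ] F} {J : F →L[ℂ] E} {e : E}
    {φ : StrongDual ℂ E} (h : ∀ x, J (P x) + φ x • e = x) (Λ : StrongDual ℂ E) :
    strongDualMap P (strongDualMap J Λ) + Λ e • φ = Λ := by
  ext x
  simpa [strongDualMap, mul_comm] using congrArg Λ (h x)

end StrongDualMap

namespace BBimod

-- Elements of `M.dual` do not coerce to functions on their own, as `BBimod.dual` is not reducible.
abbrev dualFn {A : Type} [NonUnitalNormedRing A] [NormedSpace ℂ A] {M : BBimod A}
    (Λ : M.dual.carrier) : StrongDual ℂ M.carrier := Λ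

variable {A B C : Type} [NonUnitalNormedRing A] [NormedSpace ℂ A] [NonUnitalNormedRing B]
  [NormedSpace ℂ B] [NonUnitalNormedRing C] [NormedSpace ℂ C]

def MapsActions (M : BBimod A) (N : BBimod B) (a : A) (b : B)
    (T : M.carrier →L[ℂ] N.carrier) : Prop :=
  ∀ x, T (M.lsmul a x) = N.lsmul b (T x) ∧ T (M.rsmul a x) = N.rsmul b (T x)

def MapsCommutators (M : BBimod A) (N : BBimod B) (a : A) (b : B)
    (T : M.carrier →L[ℂ] N.carrier) : Prop :=
  ∀ x, T (M.lsmul a x - M.rsmul a x) = N.lsmul b (T x) - N.rsmul b (T x)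

variable {M : BBimod A} {N : BBimod B} {a : A} {b : B} {T : M.carrier →L[ℂ] N.carrier}

lemma MapsActions.strongDualMap (h : MapsActions M N a b T) :
    MapsActions N.dual M.dual b a (_root_.strongDualMap T) := fun (Λ : StrongDual ℂ N.carrier) =>
  ⟨ext fun x => congrArg Λ (h x).2.symm, ext fun x => congrArg Λ (h x).1.symm⟩

lemma MapsCommutators.strongDualMap (h : MapsCommutators M N a b T) :
    MapsCommutators N.dual M.dual b a (_root_.strongDualMap T) :=
  fun (Λ : StrongDual ℂ N.carrier) => ext fun x => by
    have hx := congrArg Λ (h x)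
    simp only [map_sub] at hx
    show Λ (N.rsmul b (T x)) - Λ (N.lsmul b (T x)) = Λ (T (M.rsmul a x)) - Λ (T (M.lsmul a x))
    linear_combination hx

lemma mapsActions_inclusionInDoubleDual (M : BBimod A) (a : A) :
    MapsActions M M.dual.dual a a (NormedSpace.inclusionInDoubleDual ℂ M.carrier) :=
  fun _ => ⟨rfl, rfl⟩

lemma MapsActions.comp {K : BBimod C} {c : C} {S : N.carrier →L[ℂ] K.carrier}
    (hS : MapsActions N K b c S) (hT : MapsActions M N a b T) :
    MapsActions M K a c (S.comp T) := fun x =>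
  ⟨by rw [comp_apply, comp_apply, (hT x).1, (hS _).1],
    by rw [comp_apply, comp_apply, (hT x).2, (hS _).2]⟩

end BBimod

open BBimod

section Derivation

variable {C : Type} [NonUnitalNormedRing C] [NormedSpace ℂ C] {M : BBimod C}

-- For the inner derivation of `Λ` the left side is `Λ (ι (ab) - ι (ba) + ι (ba) - ι (ab)) = 0`.
lemma IsApproxInner.apply_add_apply_eq_zero {D : C →L[ℂ] M.dual.carrier}
    (hD : IsApproxInner M.dual D) {ι : C →L[ℂ] M.carrier}
    (hl : ∀ a b, M.lsmul a (ι b) = ι (a * b)) (hr : ∀ a b, M.rsmul b (ι a) = ι (a * b))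
    (a b : C) :
    dualFn (D b) (ι a) + dualFn (D a) (ι b) = 0 := by
  obtain ⟨I, l, x, hne, hx⟩ := hD
  have hlim := (((apply ℂ ℂ (ι a)).continuous.tendsto _).comp (hx b)).add
    (((apply ℂ ℂ (ι b)).continuous.tendsto _).comp (hx a))
  refine tendsto_nhds_unique (hlim.congr fun i => ?_) tendsto_const_nhds
  show dualFn (x i) (M.rsmul b (ι a)) - dualFn (x i) (M.lsmul b (ι a))
    + (dualFn (x i) (M.rsmul a (ι b)) - dualFn (x i) (M.lsmul a (ι b))) = 0
  rw [hl, hr, hl, hr]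
  ring

lemma isDerivation_smulRight {φ : C →L[ℂ] ℂ} (hφ : ∀ a b, φ (a * b) = 0)
    {m : M.carrier} (hm : ∀ a, M.lsmul a m = 0 ∧ M.rsmul a m = 0) :
    IsDerivation M (φ.smulRight m) := fun a b => by
  simp [hφ, (hm a).1, (hm b).2]

lemma IsDerivation.map_one {R : Type} [NormedRing R] [NormedSpace ℂ R] {M : BBimod R}
    {D : R →L[ℂ] M.carrier} (hD : IsDerivation M D)
    (h1 : ∀ x, M.lsmul 1 x = x ∧ M.rsmul 1 x = x) : D 1 = 0 := by
  have h := hD 1 1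
  rw [one_mul, (h1 _).1, (h1 _).2] at h
  exact add_eq_left.mp h.symm

end Derivation

section IterDual

variable (C : Type) [NonUnitalNormedRing C] [NormedSpace ℂ C] [IsScalarTower ℂ C C]
  [SMulCommClass ℂ C C] [CompleteSpace C]

noncomputable def evenDualIncl : (j : ℕ) → C →L[ℂ] (iterDual C (2 * j)).carrier
  | 0 => ContinuousLinearMap.id ℂ C
  | j + 1 => (NormedSpace.inclusionInDoubleDual ℂ _).comp (evenDualIncl j)

noncomputable def oddDualIncl :
    (j : ℕ) → (iterDual C 1).carrier →L[ℂ] (iterDual C (2 * j + 1)).carrier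
  | 0 => ContinuousLinearMap.id ℂ _
  | j + 1 => (NormedSpace.inclusionInDoubleDual ℂ _).comp (oddDualIncl j)

lemma mapsActions_evenDualIncl (a : C) :
    ∀ j, MapsActions (BBimod.base C) (iterDual C (2 * j)) a a (evenDualIncl C j)
  | 0 => fun _ => ⟨rfl, rfl⟩
  | j + 1 => (mapsActions_inclusionInDoubleDual _ a).comp (mapsActions_evenDualIncl a j)

lemma mapsActions_oddDualIncl (a : C) :
    ∀ j, MapsActions (iterDual C 1) (iterDual C (2 * j + 1)) a a (oddDualIncl C j)
  | 0 => fun _ => ⟨rfl, rfl⟩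
  | j + 1 => (mapsActions_inclusionInDoubleDual _ a).comp (mapsActions_oddDualIncl a j)

lemma evenDualIncl_lsmul (j : ℕ) (a b : C) :
    (iterDual C (2 * j)).lsmul a (evenDualIncl C j b) = evenDualIncl C j (a * b) :=
  (mapsActions_evenDualIncl C a j b).1.symm

lemma evenDualIncl_rsmul (j : ℕ) (a b : C) :
    (iterDual C (2 * j)).rsmul b (evenDualIncl C j a) = evenDualIncl C j (a * b) :=
  (mapsActions_evenDualIncl C b j a).2.symm

lemma oddDualIncl_apply_evenDualIncl (Ψ : C →L[ℂ] ℂ) (a : C) :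
    ∀ j, dualFn (oddDualIncl C j Ψ) (evenDualIncl C j a) = Ψ a
  | 0 => rfl
  | j + 1 => oddDualIncl_apply_evenDualIncl Ψ a j

variable {C}

lemma ApproxNWeaklyAmenable.eq_zero_of_map_mul_eq_zero {j : ℕ}
    (h : ApproxNWeaklyAmenable C (2 * j + 1)) {φ : C →L[ℂ] ℂ} (hφ : ∀ a b, φ (a * b) = 0) :
    φ = 0 := by
  have hφ_ann : ∀ a, (iterDual C 1).lsmul a φ = 0 ∧ (iterDual C 1).rsmul a φ = 0 := fun a =>
    ⟨ext fun x => hφ x a, ext fun x => hφ a x⟩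
  have hm : ∀ a, (iterDual C (2 * j + 1)).lsmul a (oddDualIncl C j φ) = 0 ∧
      (iterDual C (2 * j + 1)).rsmul a (oddDualIncl C j φ) = 0 := fun a => by
    rw [← (mapsActions_oddDualIncl C a j φ).1, ← (mapsActions_oddDualIncl C a j φ).2,
      (hφ_ann a).1, (hφ_ann a).2, map_zero]
    exact ⟨rfl, rfl⟩
  ext x
  have hpair := (h _ (isDerivation_smulRight hφ hm)).apply_add_apply_eq_zero
    (evenDualIncl_lsmul C j) (evenDualIncl_rsmul C j) x x
  change φ x * dualFn (oddDualIncl C j φ) (evenDualIncl C j x)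
    + φ x * dualFn (oddDualIncl C j φ) (evenDualIncl C j x) = 0 at hpair
  rw [oddDualIncl_apply_evenDualIncl] at hpair
  exact mul_self_eq_zero.mp (by linear_combination hpair / 2)

end IterDual

lemma iterDual_one_smul {R : Type} [NormedRing R] [NormedSpace ℂ R] [IsScalarTower ℂ R R]
    [SMulCommClass ℂ R R] [CompleteSpace R] : ∀ (k : ℕ) (x : (iterDual R k).carrier),
      (iterDual R k).lsmul 1 x = x ∧ (iterDual R k).rsmul 1 x = x
  | 0, x => ⟨one_mul (show R from x), mul_one (show R from x)⟩
  | k + 1, Λ => ⟨ext fun y => congrArg (dualFn Λ) (iterDual_one_smul k y).2,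
      ext fun y => congrArg (dualFn Λ) (iterDual_one_smul k y).1⟩

abbrev UnitizationL1 (A : Type) : Type := WithLp 1 (Unitization ℂ A)

section Unitization

variable (A : Type) [NonUnitalNormedRing A] [NormedSpace ℂ A] [IsScalarTower ℂ A A]
  [SMulCommClass ℂ A A]

noncomputable def unitizationInr : A →L[ℂ] UnitizationL1 A :=
  LinearMap.mkContinuous
    (((WithLp.linearEquiv 1 ℂ (Unitization ℂ A)).symm : Unitization ℂ A →ₗ[ℂ] UnitizationL1 A).comp
      (Unitization.inrHom ℂ ℂ A)) 1
    (fun a => by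
      rw [one_mul]
      exact le_of_eq (WithLp.unitization_norm_inr (𝕜 := ℂ) a))

noncomputable def unitizationSnd : UnitizationL1 A →L[ℂ] A :=
  LinearMap.mkContinuous
    ((Unitization.sndHom ℂ ℂ A).comp (WithLp.linearEquiv 1 ℂ (Unitization ℂ A)).toLinearMap) 1
    (fun x => by
      rw [one_mul, WithLp.unitization_norm_def]
      exact le_add_of_nonneg_left (norm_nonneg _))

noncomputable def unitizationFst : UnitizationL1 A →L[ℂ] ℂ :=
  LinearMap.mkContinuous
    (((Unitization.fstHom ℂ A).toLinearMap).comp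
      (WithLp.linearEquiv 1 ℂ (Unitization ℂ A)).toLinearMap) 1
    (fun x => by
      rw [one_mul, WithLp.unitization_norm_def]
      exact le_add_of_nonneg_right (norm_nonneg _))

lemma unitizationInr_mul (a b : A) :
    unitizationInr A (a * b) = unitizationInr A a * unitizationInr A b :=
  congrArg (WithLp.toLp 1) (Unitization.inr_mul ℂ a b)

lemma unitizationSnd_mul (x y : UnitizationL1 A) :
    unitizationSnd A (x * y) = unitizationFst A x • unitizationSnd A y
      + unitizationFst A y • unitizationSnd A x + unitizationSnd A x * unitizationSnd A y :=
  Unitization.snd_mul _ _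

lemma unitizationInr_snd_add_fst_smul_one (x : UnitizationL1 A) :
    unitizationInr A (unitizationSnd A x) + unitizationFst A x • 1 = x := by
  apply (WithLp.linearEquiv 1 ℂ (Unitization ℂ A)).injective
  rw [map_add, map_smul]
  show (Unitization.inr (WithLp.ofLp x).snd : Unitization ℂ A) + (WithLp.ofLp x).fst • 1
    = WithLp.ofLp x
  ext <;> simp

variable [CompleteSpace A]

noncomputable def iterDualSndInr : (k : ℕ) →
    ((iterDual (UnitizationL1 A) k).carrier →L[ℂ] (iterDual A k).carrier) ×
    ((iterDual A k).carrier →L[ℂ] (iterDual (UnitizationL1 A) k).carrier)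
  | 0 => (unitizationSnd A, unitizationInr A)
  | k + 1 => (strongDualMap (iterDualSndInr k).2, strongDualMap (iterDualSndInr k).1)

noncomputable def iterDualSnd (k : ℕ) :
    (iterDual (UnitizationL1 A) k).carrier →L[ℂ] (iterDual A k).carrier :=
  (iterDualSndInr A k).1

noncomputable def iterDualInr (k : ℕ) :
    (iterDual A k).carrier →L[ℂ] (iterDual (UnitizationL1 A) k).carrier :=
  (iterDualSndInr A k).2

-- The paper's `e` at even levels and `e*` at odd levels.
noncomputable def iterDualUnit : (k : ℕ) → (iterDual (UnitizationL1 A) k).carrier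
  | 0 => (1 : UnitizationL1 A)
  | 1 => unitizationFst A
  | k + 2 => NormedSpace.inclusionInDoubleDual ℂ _ (iterDualUnit k)

lemma iterDualInr_iterDualSnd_add_smul_iterDualUnit :
    ∀ (k : ℕ) (x : (iterDual (UnitizationL1 A) k).carrier),
      iterDualInr A k (iterDualSnd A k x) + dualFn (iterDualUnit A (k + 1)) x • iterDualUnit A k = x
  | 0, x => unitizationInr_snd_add_fst_smul_one A x
  | k + 1, Λ => strongDualMap_add_smul_eq_self (iterDualInr_iterDualSnd_add_smul_iterDualUnit k) Λ

lemma mapsActions_iterDualInr (a : A) : ∀ j, MapsActions (iterDual A (2 * j))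
    (iterDual (UnitizationL1 A) (2 * j)) a (unitizationInr A a) (iterDualInr A (2 * j))
  | 0 => fun x => ⟨unitizationInr_mul A a x, unitizationInr_mul A x a⟩
  | j + 1 => (mapsActions_iterDualInr a j).strongDualMap.strongDualMap

lemma mapsActions_iterDualSnd (a : A) (j : ℕ) : MapsActions
    (iterDual (UnitizationL1 A) (2 * j + 1)) (iterDual A (2 * j + 1)) (unitizationInr A a) a
    (iterDualSnd A (2 * j + 1)) :=
  (mapsActions_iterDualInr A a j).strongDualMap

lemma mapsCommutators_iterDualSnd (b : UnitizationL1 A) : ∀ j, MapsCommutators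
    (iterDual (UnitizationL1 A) (2 * j)) (iterDual A (2 * j)) b (unitizationSnd A b)
    (iterDualSnd A (2 * j))
  | 0 => fun (x : UnitizationL1 A) => by
      show unitizationSnd A (b * x - x * b) = _ * unitizationSnd A x - unitizationSnd A x * _
      rw [map_sub, unitizationSnd_mul, unitizationSnd_mul]
      abel
  | j + 1 => (mapsCommutators_iterDualSnd b j).strongDualMap.strongDualMap

lemma mapsCommutators_iterDualInr (b : UnitizationL1 A) (j : ℕ) : MapsCommutators
    (iterDual A (2 * j + 1)) (iterDual (UnitizationL1 A) (2 * j + 1)) (unitizationSnd A b) b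
    (iterDualInr A (2 * j + 1)) :=
  (mapsCommutators_iterDualSnd A b j).strongDualMap

lemma iterDualInr_evenDualIncl (a : A) : ∀ j, iterDualInr A (2 * j) (evenDualIncl A j a)
    = evenDualIncl (UnitizationL1 A) j (unitizationInr A a)
  | 0 => rfl
  | j + 1 => congrArg (NormedSpace.inclusionInDoubleDual ℂ _) (iterDualInr_evenDualIncl a j)

lemma iterDualUnit_eq_evenDualIncl_one : ∀ j,
    iterDualUnit A (2 * j) = evenDualIncl (UnitizationL1 A) j 1
  | 0 => rfl
  | j + 1 => congrArg (NormedSpace.inclusionInDoubleDual ℂ _) (iterDualUnit_eq_evenDualIncl_one j)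

variable {A} {j : ℕ}
  {D : UnitizationL1 A →L[ℂ] (iterDual (UnitizationL1 A) (2 * j + 1)).carrier}

lemma IsDerivation.iterDualSnd_comp_inr (hD : IsDerivation _ D) :
    IsDerivation (iterDual A (2 * j + 1))
      ((iterDualSnd A (2 * j + 1)).comp (D.comp (unitizationInr A))) := fun a b => by
  simp only [comp_apply, unitizationInr_mul, hD _ _, map_add,
    (mapsActions_iterDualSnd A a j _).1, (mapsActions_iterDualSnd A b j _).2]

lemma IsDerivation.apply_inr_mul_unit (hD : IsDerivation _ D) (a b : A) :
    dualFn (D (unitizationInr A (a * b))) (iterDualUnit A (2 * j))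
      = dualFn (iterDualSnd A (2 * j + 1) (D (unitizationInr A b))) (evenDualIncl A j a)
        + dualFn (iterDualSnd A (2 * j + 1) (D (unitizationInr A a))) (evenDualIncl A j b) := by
  have hl : ∀ b, (iterDual (UnitizationL1 A) (2 * j)).lsmul (unitizationInr A b)
      (iterDualUnit A (2 * j)) = iterDualInr A (2 * j) (evenDualIncl A j b) := fun b => by
    rw [iterDualUnit_eq_evenDualIncl_one, evenDualIncl_lsmul, mul_one, iterDualInr_evenDualIncl]
  have hr : ∀ a, (iterDual (UnitizationL1 A) (2 * j)).rsmul (unitizationInr A a)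
      (iterDualUnit A (2 * j)) = iterDualInr A (2 * j) (evenDualIncl A j a) := fun a => by
    rw [iterDualUnit_eq_evenDualIncl_one, evenDualIncl_rsmul, one_mul, iterDualInr_evenDualIncl]
  rw [unitizationInr_mul, hD]
  change dualFn (D (unitizationInr A b)) ((iterDual (UnitizationL1 A) (2 * j)).rsmul
      (unitizationInr A a) (iterDualUnit A (2 * j)))
    + dualFn (D (unitizationInr A a)) ((iterDual (UnitizationL1 A) (2 * j)).lsmul
      (unitizationInr A b) (iterDualUnit A (2 * j))) = _
  rw [hl, hr]
  rfl

lemma IsDerivation.apply_inr_unit_eq_zero (hD : IsDerivation _ D)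
    (h : ApproxNWeaklyAmenable A (2 * j + 1)) (a : A) :
    dualFn (D (unitizationInr A a)) (iterDualUnit A (2 * j)) = 0 := by
  have hd := h _ hD.iterDualSnd_comp_inr
  have hφ := h.eq_zero_of_map_mul_eq_zero
    (φ := (apply ℂ ℂ (iterDualUnit A (2 * j))).comp (D.comp (unitizationInr A))) fun a b => by
      change dualFn (D (unitizationInr A (a * b))) (iterDualUnit A (2 * j)) = 0
      rw [hD.apply_inr_mul_unit]
      exact hd.apply_add_apply_eq_zero (evenDualIncl_lsmul A j) (evenDualIncl_rsmul A j) a b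
  exact congrArg (· a) hφ

lemma IsDerivation.eq_iterDualInr_comp (hD : IsDerivation _ D)
    (h : ApproxNWeaklyAmenable A (2 * j + 1)) (b : UnitizationL1 A) :
    D b = iterDualInr A (2 * j + 1)
      (iterDualSnd A (2 * j + 1) (D (unitizationInr A (unitizationSnd A b)))) := by
  have hb : D b = D (unitizationInr A (unitizationSnd A b)) := by
    conv_lhs => rw [← unitizationInr_snd_add_fst_smul_one A b]
    rw [map_add, map_smul, hD.map_one (iterDual_one_smul _), smul_zero, add_zero]
  have hdec := iterDualInr_iterDualSnd_add_smul_iterDualUnit A (2 * j + 1)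
    (D (unitizationInr A (unitizationSnd A b)))
  change _ + dualFn (D _) (iterDualUnit A (2 * j)) • _ = _ at hdec
  rw [hD.apply_inr_unit_eq_zero h, zero_smul, add_zero] at hdec
  rw [hb, hdec]

end Unitization

theorem unitization_approxOddWeaklyAmenable
    (n : ℕ) (hn : 1 ≤ n)
    (h : ApproxNWeaklyAmenable A (2 * n - 1)) :
    ApproxNWeaklyAmenable (WithLp 1 (Unitization ℂ A)) (2 * n - 1) := by
  obtain ⟨j, rfl⟩ : ∃ j, n = j + 1 := ⟨n - 1, by omega⟩
  change ApproxNWeaklyAmenable A (2 * j + 1) at h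
  intro D hD
  obtain ⟨I, l, x, hne, hx⟩ := h _ hD.iterDualSnd_comp_inr
  refine ⟨I, l, fun i => iterDualInr A (2 * j + 1) (x i), hne, fun b => ?_⟩
  rw [hD.eq_iterDualInr_comp h b]
  exact (((iterDualInr A _).continuous.tendsto _).comp (hx _)).congr fun i =>
    mapsCommutators_iterDualInr A b j (x i)
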